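/- Let A be the 2(n+1)×2(n+1) block matrix A = [[0, -I], [-Δ + ω₀² I, 2γ I]], where Δ is the discrete Neumann Laplacian on {0,…,n}, ω₀ > 0, γ > 0, and I is the (n+1)×(n+1) identity. Then every eigenvalue λ of A satisfies Re λ ≥ min{γ, ω₀²/(2γ)} > 0; in particular A is invertible and the semigroup e^{-At} is exponentially stable. -/

import Mathlib

open Matrix

/-- The matrix of `-Δ` for the discrete Neumann Laplacian on `{0,…,n}`. -/
def negNeumannLap (n : ℕ) : Matrix (Fin (n + 1)) (Fin (n + 1)) ℝ := fun x y =>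
  if x = y then (if x.val = 0 ∨ x.val = n then 1 else 2)
  else if x.val + 1 = y.val ∨ y.val + 1 = x.val then -1 else 0

lemma lap_symm (n : ℕ) : (negNeumannLap n)ᵀ = negNeumannLap n := by
  ext i j
  simp only [Matrix.transpose_apply, negNeumannLap]
  by_cases h : i = j
  · subst h; simp
  · rw [if_neg (Ne.symm h), if_neg h]
    congr 1
    exact propext or_comm

lemma lap_apply_symm (n : ℕ) (i j : Fin (n+1)) :
    negNeumannLap n j i = negNeumannLap n i j :=
  congrFun (congrFun (lap_symm n) i) j

lemma lap_diag (n : ℕ) (k : Fin (n+1)) :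
    negNeumannLap n k k = if k.val = 0 ∨ k.val = n then 1 else 2 := by
  simp [negNeumannLap]

lemma lap_diag_le (n : ℕ) (k : Fin (n+1)) : negNeumannLap n k k ≤ 2 := by
  rw [lap_diag]; split <;> norm_num

lemma lap_diag_pos (n : ℕ) (k : Fin (n+1)) : 0 < negNeumannLap n k k := by
  rw [lap_diag]; split <;> norm_num

lemma lap_rowsum (n : ℕ) (k : Fin (n+1)) :
    ∑ j ∈ Finset.univ.erase k, |negNeumannLap n k j| ≤ negNeumannLap n k k := by
  classical
  have h1 : ∀ j ∈ Finset.univ.erase k, |negNeumannLap n k j| ≤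
      ((if k.val + 1 = j.val then (1:ℝ) else 0) + (if j.val + 1 = k.val then (1:ℝ) else 0)) := by
    intro j hj
    have hjk : k ≠ j := fun h => (Finset.ne_of_mem_erase hj) h.symm
    simp only [negNeumannLap, if_neg hjk]
    split_ifs <;> simp_all
  have h2 : ∑ j ∈ Finset.univ.erase k, |negNeumannLap n k j| ≤
      ∑ j : Fin (n+1), ((if k.val + 1 = j.val then (1:ℝ) else 0) +
        (if j.val + 1 = k.val then (1:ℝ) else 0)) := by
    refine le_trans (Finset.sum_le_sum h1) ?_
    refine Finset.sum_le_sum_of_subset_of_nonneg (Finset.subset_univ _) ?_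
    intro j _ _; positivity
  rw [Finset.sum_add_distrib] at h2
  have hA : ∑ j : Fin (n+1), (if k.val + 1 = j.val then (1:ℝ) else 0) ≤ 1 := by
    rw [Finset.sum_boole]
    norm_cast
    refine Finset.card_le_one.mpr ?_
    intro a ha b hb
    simp only [Finset.mem_filter] at ha hb
    exact Fin.ext (by omega)
  have hB : ∑ j : Fin (n+1), (if j.val + 1 = k.val then (1:ℝ) else 0) ≤ 1 := by
    rw [Finset.sum_boole]
    norm_cast
    refine Finset.card_le_one.mpr ?_
    intro a ha b hb
    simp only [Finset.mem_filter] at ha hb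
    exact Fin.ext (by omega)
  rw [lap_diag]
  split_ifs with h
  · rcases h with h | h
    · have hB0 : ∑ j : Fin (n+1), (if j.val + 1 = k.val then (1:ℝ) else 0) = 0 := by
        apply Finset.sum_eq_zero; intro j _; rw [if_neg (by omega)]
      linarith
    · have hA0 : ∑ j : Fin (n+1), (if k.val + 1 = j.val then (1:ℝ) else 0) = 0 := by
        apply Finset.sum_eq_zero; intro j _
        rw [if_neg (by have := j.isLt; omega)]
      linarith
  · linarith

lemma lap_isHermitian (n : ℕ) : (negNeumannLap n).IsHermitian := by
  have h := lap_symm n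
  unfold Matrix.IsHermitian
  ext i j
  simp only [Matrix.conjTranspose_apply, star_trivial]
  exact congrFun (congrFun h i) j

lemma real_sym_posSemidef {m : Type*} [Fintype m] [DecidableEq m] (S : Matrix m m ℝ)
    (hS : S.IsHermitian)
    (h : ∀ μ : ℝ, Module.End.HasEigenvalue (Matrix.toLin' S) μ → 0 ≤ μ) : S.PosSemidef := by
  apply hS.posSemidef_iff_eigenvalues_nonneg.mpr
  intro i
  apply h
  have hmem := hS.eigenvalues_mem_spectrum_real i
  rw [Module.End.hasEigenvalue_iff_mem_spectrum]
  have heq : Matrix.toLin' S = Matrix.toLinAlgEquiv' S := rfl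
  rw [heq, AlgEquiv.spectrum_eq]
  exact hmem

lemma lap_posSemidef (n : ℕ) : (negNeumannLap n).PosSemidef := by
  apply real_sym_posSemidef _ (lap_isHermitian n)
  intro μ hμ
  obtain ⟨k, hk⟩ := eigenvalue_mem_ball hμ
  rw [Metric.mem_closedBall, Real.dist_eq] at hk
  have hr : ∑ j ∈ Finset.univ.erase k, ‖negNeumannLap n k j‖ ≤ negNeumannLap n k k := by
    simpa [Real.norm_eq_abs] using lap_rowsum n k
  have := abs_le.mp (le_trans hk hr)
  linarith [this.1]

lemma lap_upper_posSemidef (n : ℕ) : ((4:ℝ) • (1 : Matrix (Fin (n+1)) (Fin (n+1)) ℝ)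
    - negNeumannLap n).PosSemidef := by
  have hsym : ((4:ℝ) • (1 : Matrix (Fin (n+1)) (Fin (n+1)) ℝ) - negNeumannLap n).IsHermitian := by
    unfold Matrix.IsHermitian
    ext i j
    simp only [Matrix.conjTranspose_apply, star_trivial, Matrix.sub_apply, Matrix.smul_apply,
      Matrix.one_apply]
    rw [show negNeumannLap n j i = negNeumannLap n i j from
      congrFun (congrFun (lap_symm n) i) j]
    by_cases h : i = j
    · subst h; simp
    · rw [if_neg h, if_neg (Ne.symm h)]
  apply real_sym_posSemidef _ hsym
  intro μ hμ
  obtain ⟨k, hk⟩ := eigenvalue_mem_ball hμ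
  rw [Metric.mem_closedBall, Real.dist_eq] at hk
  have hdiag : ((4:ℝ) • (1 : Matrix (Fin (n+1)) (Fin (n+1)) ℝ) - negNeumannLap n) k k
      = 4 - negNeumannLap n k k := by
    simp [Matrix.sub_apply, Matrix.smul_apply, Matrix.one_apply]
  have hoff : ∀ j ∈ Finset.univ.erase k,
      ‖((4:ℝ) • (1 : Matrix (Fin (n+1)) (Fin (n+1)) ℝ) - negNeumannLap n) k j‖
      = |negNeumannLap n k j| := by
    intro j hj
    have hjk : j ≠ k := Finset.ne_of_mem_erase hj
    simp [Matrix.sub_apply, Matrix.smul_apply, Matrix.one_apply, Ne.symm hjk,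
      Real.norm_eq_abs, abs_neg]
  rw [hdiag, Finset.sum_congr rfl hoff] at hk
  have hr := lap_rowsum n k
  have hd := lap_diag_le n k
  have := abs_le.mp (le_trans hk hr)
  linarith [this.1]

lemma hasDerivAt_dot {m : Type*} [Fintype m] {f g : ℝ → m → ℝ} {f' g' : m → ℝ} {t : ℝ}
    (hf : ∀ i, HasDerivAt (fun s => f s i) (f' i) t)
    (hg : ∀ i, HasDerivAt (fun s => g s i) (g' i) t) :
    HasDerivAt (fun s => f s ⬝ᵥ g s) (f' ⬝ᵥ g t + f t ⬝ᵥ g') t := by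
  simp only [dotProduct]
  rw [← Finset.sum_add_distrib]
  exact HasDerivAt.fun_sum fun i _ => (hf i).mul (hg i)

lemma hasDerivAt_mulVec {m : Type*} [Fintype m] {f : ℝ → m → ℝ} {f' : m → ℝ} {t : ℝ}
    (L : Matrix m m ℝ) (hf : ∀ i, HasDerivAt (fun s => f s i) (f' i) t) (i : m) :
    HasDerivAt (fun s => (L *ᵥ f s) i) ((L *ᵥ f') i) t := by
  simp only [Matrix.mulVec, dotProduct]
  exact HasDerivAt.fun_sum fun j _ => (hf j).const_mul (L i j)

lemma eig_re_bound (n : ℕ) (γ ω₀ : ℝ) (hγ : 0 < γ) (hω₀ : 0 < ω₀)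
    (μ : ℂ) (hμ : Module.End.HasEigenvalue (Matrix.toLin'
      ((Matrix.fromBlocks (0 : Matrix (Fin (n+1)) (Fin (n+1)) ℝ) (-1)
        (negNeumannLap n + ω₀ ^ 2 • 1)
        ((2 * γ) • (1 : Matrix (Fin (n+1)) (Fin (n+1)) ℝ))).map (fun r => (r : ℂ)))) μ) :
    min γ (ω₀ ^ 2 / (2 * γ)) ≤ μ.re := by
  classical
  open scoped ComplexOrder in
  set Lr : Matrix (Fin (n+1)) (Fin (n+1)) ℝ := negNeumannLap n + ω₀ ^ 2 • 1 with hLr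
  set Lc : Matrix (Fin (n+1)) (Fin (n+1)) ℂ := Lr.map (fun r => (r : ℂ)) with hLc
  have hAc : (Matrix.fromBlocks (0 : Matrix (Fin (n+1)) (Fin (n+1)) ℝ) (-1) Lr
      ((2 * γ) • (1 : Matrix (Fin (n+1)) (Fin (n+1)) ℝ))).map (fun r => (r : ℂ))
      = Matrix.fromBlocks (0 : Matrix (Fin (n+1)) (Fin (n+1)) ℂ) (-1) Lc
        (((2 * γ : ℝ) : ℂ) • 1) := by
    ext z y
    rcases z with i | i <;> rcases y with j | j <;>
      simp [Matrix.map_apply, Matrix.fromBlocks_apply₁₁, Matrix.fromBlocks_apply₁₂,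
        Matrix.fromBlocks_apply₂₁, Matrix.fromBlocks_apply₂₂, Matrix.one_apply,
        Matrix.smul_apply, apply_ite (fun r : ℝ => (r : ℂ)), hLc, hLr]
  rw [hAc] at hμ
  obtain ⟨w, hw⟩ := hμ.exists_hasEigenvector
  have hw0 : w ≠ 0 := hw.right
  have heq : Matrix.fromBlocks (0 : Matrix (Fin (n+1)) (Fin (n+1)) ℂ) (-1) Lc
      (((2 * γ : ℝ) : ℂ) • 1) *ᵥ w = μ • w := by
    have h := hw.apply_eq_smul
    rwa [Matrix.toLin'_apply] at h
  set u : Fin (n+1) → ℂ := fun i => w (Sum.inl i) with hu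
  set v : Fin (n+1) → ℂ := fun i => w (Sum.inr i) with hv
  have hwe : w = Sum.elim u v := funext fun z => by cases z <;> rfl
  rw [hwe, Matrix.fromBlocks_mulVec] at heq
  have h1 : ∀ i, -(v i) = μ * u i := by
    intro i
    have h := congrFun heq (Sum.inl i)
    simpa [Matrix.zero_mulVec, Matrix.neg_mulVec, Matrix.one_mulVec] using h
  have h2 : ∀ i, (Lc *ᵥ u) i + ((2 * γ : ℝ) : ℂ) * v i = μ * v i := by
    intro i
    have h := congrFun heq (Sum.inr i)
    simpa [Matrix.smul_mulVec, Matrix.one_mulVec] using h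
  set ν : ℂ := ((2 * γ : ℝ) : ℂ) * μ - μ ^ 2 with hν
  have hLu : Lc *ᵥ u = ν • u := by
    funext i
    have ha := h1 i
    have hb := h2 i
    simp only [Pi.smul_apply, smul_eq_mul, hν]
    linear_combination hb + (((2 * γ : ℝ) : ℂ) - μ) * ha
  have hu0 : u ≠ 0 := by
    intro h0
    apply hw0
    rw [hwe]
    funext z
    cases z with
    | inl i => simp [h0]
    | inr i =>
      have := h1 i
      rw [h0] at this
      simp only [Pi.zero_apply, mul_zero] at this
      simpa [Sum.elim_inr] using (neg_eq_zero.mp this)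
  have hev : Module.End.HasEigenvalue (Matrix.toLin' Lc) ν := by
    apply Module.End.hasEigenvalue_of_hasEigenvector (x := u)
    refine ⟨Module.End.mem_eigenspace_iff.mpr ?_, hu0⟩
    rw [Matrix.toLin'_apply, hLu]
  -- Gershgorin bound
  obtain ⟨k, hk⟩ := eigenvalue_mem_ball hev
  rw [Metric.mem_closedBall, dist_eq_norm] at hk
  have hdiag : Lc k k = ((negNeumannLap n k k + ω₀ ^ 2 : ℝ) : ℂ) := by
    simp [hLc, hLr, Matrix.map_apply, Matrix.add_apply, Matrix.smul_apply, Matrix.one_apply]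
  have hrow : ∑ j ∈ Finset.univ.erase k, ‖Lc k j‖ ≤ negNeumannLap n k k := by
    have hcong : ∀ j ∈ Finset.univ.erase k, ‖Lc k j‖ = |negNeumannLap n k j| := by
      intro j hj
      have hjk : j ≠ k := Finset.ne_of_mem_erase hj
      simp [hLc, hLr, Matrix.map_apply, Matrix.add_apply, Matrix.smul_apply, Matrix.one_apply,
        (Ne.symm hjk : ¬ k = j), Complex.norm_real, Real.norm_eq_abs]
    rw [Finset.sum_congr rfl hcong]
    exact lap_rowsum n k
  have hre : ω₀ ^ 2 ≤ ν.re := by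
    have h4 : ‖ν - Lc k k‖ ≤ negNeumannLap n k k := le_trans hk hrow
    rw [hdiag] at h4
    have h3 : |(ν - ((negNeumannLap n k k + ω₀ ^ 2 : ℝ) : ℂ)).re|
        ≤ ‖ν - ((negNeumannLap n k k + ω₀ ^ 2 : ℝ) : ℂ)‖ := Complex.abs_re_le_norm _
    simp only [Complex.sub_re, Complex.ofReal_re] at h3
    have := abs_le.mp (le_trans h3 h4)
    linarith [this.1]
  -- realness of ν
  have hherm : Lcᴴ = Lc := by
    have hLrsym : ∀ i j, Lr j i = Lr i j := by
      intro i j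
      simp only [hLr, Matrix.add_apply, Matrix.smul_apply, Matrix.one_apply]
      rw [lap_apply_symm n i j]
      by_cases h : i = j
      · subst h; rfl
      · rw [if_neg h, if_neg (Ne.symm h)]
    ext i j
    simp only [Matrix.conjTranspose_apply, hLc, Matrix.map_apply, Complex.star_def,
      Complex.conj_ofReal]
    rw [hLrsym i j]
  have hνreal : ν.im = 0 := by
    have hts : star u ⬝ᵥ (Lc *ᵥ u) = ν * (star u ⬝ᵥ u) := by
      rw [hLu]
      simp [dotProduct_smul, smul_eq_mul]
    have hself : star (star u ⬝ᵥ (Lc *ᵥ u)) = star u ⬝ᵥ (Lc *ᵥ u) := by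
      have e1 : star (star u ⬝ᵥ (Lc *ᵥ u)) = star (Lc *ᵥ u) ⬝ᵥ u :=
        (Matrix.star_dotProduct (Lc *ᵥ u) u).symm
      rw [e1, Matrix.star_mulVec, hherm, ← Matrix.dotProduct_mulVec]
    have htreal : star (star u ⬝ᵥ u) = star u ⬝ᵥ u := (Matrix.star_dotProduct u u).symm
    have ht0 : (star u ⬝ᵥ u) ≠ 0 :=
      fun h => hu0 (dotProduct_star_self_eq_zero.mp h)
    rw [hts, star_mul', htreal] at hself
    have : star ν = ν := mul_right_cancel₀ ht0 hself
    have him := congrArg Complex.im this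
    simp only [Complex.star_def, Complex.conj_im] at him
    linarith
  -- algebra
  set a := μ.re with ha'
  set b := μ.im with hb'
  have hνim : ν.im = 2 * γ * b - 2 * a * b := by
    simp [hν, Complex.sub_im, Complex.mul_im, Complex.ofReal_re, Complex.ofReal_im, pow_two,
      Complex.mul_re]
    try ring
  have hνre : ν.re = 2 * γ * a - (a ^ 2 - b ^ 2) := by
    simp [hν, Complex.sub_re, Complex.mul_re, Complex.ofReal_re, Complex.ofReal_im, pow_two]
    try ring
  rw [hνre] at hre
  rw [hνim] at hνreal
  by_cases hb : b = 0
  · rw [hb] at hre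
    have hge : ω₀ ^ 2 / (2 * γ) ≤ a := by
      rw [div_le_iff₀ (by linarith)]
      nlinarith [sq_nonneg a]
    exact le_trans (min_le_right _ _) hge
  · have : a = γ := by
      have : 2 * b * (γ - a) = 0 := by linarith
      rcases mul_eq_zero.mp this with h | h
      · exact absurd (by linarith) hb
      · linarith
    rw [this]
    exact min_le_left _ _

lemma dot_amgm {m : Type*} [Fintype m] (y z : m → ℝ) :
    2 * (y ⬝ᵥ z) ≤ y ⬝ᵥ y + z ⬝ᵥ z := by
  simp only [dotProduct]
  rw [Finset.mul_sum, ← Finset.sum_add_distrib]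
  apply Finset.sum_le_sum
  intro i _
  nlinarith [sq_nonneg (y i - z i)]

lemma dot_self_nonneg {m : Type*} [Fintype m] (y : m → ℝ) : 0 ≤ y ⬝ᵥ y :=
  Finset.sum_nonneg fun i _ => mul_self_nonneg _

set_option maxHeartbeats 1000000 in
lemma exp_stability (n : ℕ) (γ ω₀ : ℝ) (hγ : 0 < γ) (hω₀ : 0 < ω₀) :
    ∃ C : ℝ, 0 < C ∧ ∃ α : ℝ, 0 < α ∧
      ∀ x : ℝ → (Fin (n + 1) ⊕ Fin (n + 1) → ℝ),
        (∀ t : ℝ, HasDerivAt x (-((Matrix.fromBlocks (0 : Matrix (Fin (n+1)) (Fin (n+1)) ℝ) (-1)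
          (negNeumannLap n + ω₀ ^ 2 • 1) ((2 * γ) • 1)).mulVec (x t))) t) →
        ∀ t : ℝ, 0 ≤ t → ‖x t‖ ≤ C * Real.exp (-α * t) * ‖x 0‖ := by
  classical
  obtain ⟨m, hm, hmdef⟩ : ∃ m : ℝ, 0 < m ∧ m = ω₀ ^ 2 := ⟨ω₀ ^ 2, by positivity, rfl⟩
  set Lr : Matrix (Fin (n+1)) (Fin (n+1)) ℝ := negNeumannLap n + ω₀ ^ 2 • 1 with hLrdef
  -- quadratic form bounds
  have hq_lower : ∀ p : Fin (n+1) → ℝ, m * (p ⬝ᵥ p) ≤ p ⬝ᵥ (Lr *ᵥ p) := by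
    intro p
    have h0 : 0 ≤ p ⬝ᵥ (negNeumannLap n *ᵥ p) := by
      have := (lap_posSemidef n).dotProduct_mulVec_nonneg p
      simpa using this
    have hexp : p ⬝ᵥ (Lr *ᵥ p) = p ⬝ᵥ (negNeumannLap n *ᵥ p) + m * (p ⬝ᵥ p) := by
      rw [hLrdef, Matrix.add_mulVec, dotProduct_add, Matrix.smul_mulVec,
        Matrix.one_mulVec, dotProduct_smul, smul_eq_mul, hmdef]
    linarith
  have hq_upper : ∀ p : Fin (n+1) → ℝ, p ⬝ᵥ (Lr *ᵥ p) ≤ (m + 4) * (p ⬝ᵥ p) := by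
    intro p
    have h0 : 0 ≤ p ⬝ᵥ (((4:ℝ) • (1 : Matrix (Fin (n+1)) (Fin (n+1)) ℝ)
        - negNeumannLap n) *ᵥ p) := by
      have := (lap_upper_posSemidef n).dotProduct_mulVec_nonneg p
      simpa using this
    have hexp : p ⬝ᵥ (((4:ℝ) • (1 : Matrix (Fin (n+1)) (Fin (n+1)) ℝ)
        - negNeumannLap n) *ᵥ p) = 4 * (p ⬝ᵥ p) - p ⬝ᵥ (negNeumannLap n *ᵥ p) := by
      rw [Matrix.sub_mulVec, dotProduct_sub, Matrix.smul_mulVec,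
        Matrix.one_mulVec, dotProduct_smul, smul_eq_mul]
    have hexp2 : p ⬝ᵥ (Lr *ᵥ p) = p ⬝ᵥ (negNeumannLap n *ᵥ p) + m * (p ⬝ᵥ p) := by
      rw [hLrdef, Matrix.add_mulVec, dotProduct_add, Matrix.smul_mulVec,
        Matrix.one_mulVec, dotProduct_smul, smul_eq_mul, hmdef]
    have hpp : 0 ≤ p ⬝ᵥ p := dot_self_nonneg p
    linarith
  have hLrT : Lrᵀ = Lr := by
    rw [hLrdef, Matrix.transpose_add, Matrix.transpose_smul, Matrix.transpose_one, lap_symm]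
  have hsymdot : ∀ p r : Fin (n+1) → ℝ, p ⬝ᵥ (Lr *ᵥ r) = r ⬝ᵥ (Lr *ᵥ p) := by
    intro p r
    rw [Matrix.dotProduct_mulVec, ← Matrix.mulVec_transpose, hLrT, dotProduct_comm]
  -- constants
  obtain ⟨ε, hε, hε1, hε2, hε3, hε4⟩ :
      ∃ ε : ℝ, 0 < ε ∧ ε ≤ γ/2 ∧ 2*ε*γ ≤ m ∧ ε ≤ m/2 ∧ ε ≤ 1/2 := by
    refine ⟨(1/2) * min (min γ (m / (2*γ))) (min m 1), ?_, ?_, ?_, ?_, ?_⟩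
    · apply mul_pos (by norm_num)
      exact lt_min (lt_min hγ (by positivity)) (lt_min hm (by norm_num))
    · have : min (min γ (m / (2*γ))) (min m 1) ≤ γ :=
        le_trans (min_le_left _ _) (min_le_left _ _)
      linarith
    · have h1 : min (min γ (m / (2*γ))) (min m 1) ≤ m / (2*γ) :=
        le_trans (min_le_left _ _) (min_le_right _ _)
      have h3 : (0:ℝ) < 2*γ := by linarith
      have h4 : (m / (2*γ)) * (2*γ) = m := div_mul_cancel₀ m (ne_of_gt h3)
      nlinarith
    · have : min (min γ (m / (2*γ))) (min m 1) ≤ m :=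
        le_trans (min_le_right _ _) (min_le_left _ _)
      linarith
    · have : min (min γ (m / (2*γ))) (min m 1) ≤ 1 :=
        le_trans (min_le_right _ _) (min_le_right _ _)
      linarith
  obtain ⟨α, hα, hα2, hαγ⟩ : ∃ α : ℝ, 0 < α ∧ 2*α ≤ ε ∧ α ≤ γ :=
    ⟨ε/4, by linarith, by linarith, by linarith⟩
  obtain ⟨κ₁, hκ₁, hκ₁a, hκ₁b⟩ : ∃ k : ℝ, 0 < k ∧ k ≤ m/2 ∧ k ≤ 1/2 :=
    ⟨min (m/2) (1/2), lt_min (by linarith) (by norm_num), min_le_left _ _, min_le_right _ _⟩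
  obtain ⟨K, hK, hKeq⟩ : ∃ K : ℝ, 0 < K ∧ κ₁ * K = (m+5) * (2*(n:ℝ)+2) := by
    refine ⟨(m+5) * (2*(n:ℝ)+2) / κ₁, by positivity, ?_⟩
    field_simp
  refine ⟨Real.sqrt K, Real.sqrt_pos.mpr hK, α, hα, ?_⟩
  intro x hx t ht
  -- components
  set u : ℝ → Fin (n+1) → ℝ := fun s i => x s (Sum.inl i) with hudef
  set v : ℝ → Fin (n+1) → ℝ := fun s i => x s (Sum.inr i) with hvdef
  have hxe : ∀ s, x s = Sum.elim (u s) (v s) := fun s => funext fun z => by cases z <;> rfl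
  set dv : ℝ → Fin (n+1) → ℝ := fun s => -(Lr *ᵥ u s) - (2*γ) • v s with hdvdef
  have hAx : ∀ s, (Matrix.fromBlocks (0 : Matrix (Fin (n+1)) (Fin (n+1)) ℝ) (-1)
      Lr ((2 * γ) • 1)) *ᵥ x s = Sum.elim (-(v s)) (Lr *ᵥ u s + (2*γ) • v s) := by
    intro s
    rw [hxe s, Matrix.fromBlocks_mulVec, Sum.elim_comp_inl, Sum.elim_comp_inr,
      Matrix.zero_mulVec, Matrix.neg_mulVec, Matrix.one_mulVec, zero_add,
      Matrix.smul_mulVec, Matrix.one_mulVec]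
  have hu' : ∀ s i, HasDerivAt (fun r => u r i) (v s i) s := by
    intro s i
    have h := hasDerivAt_pi.mp (hx s) (Sum.inl i)
    rw [hAx s] at h
    simpa using h
  have hv' : ∀ s i, HasDerivAt (fun r => v r i) (dv s i) s := by
    intro s i
    have h := hasDerivAt_pi.mp (hx s) (Sum.inr i)
    rw [hAx s] at h
    have hval : dv s i = (-(Sum.elim (-(v s)) (Lr *ᵥ u s + (2*γ) • v s))) (Sum.inr i) := by
      simp [hdvdef]
      try ring
    rw [hval]
    exact h
  -- energy
  set E : ℝ → ℝ := fun s => u s ⬝ᵥ (Lr *ᵥ u s) + v s ⬝ᵥ v s + (2*ε) * (u s ⬝ᵥ v s) with hEdef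
  set D : ℝ → ℝ := fun s => (v s ⬝ᵥ (Lr *ᵥ u s) + u s ⬝ᵥ (Lr *ᵥ v s))
      + (dv s ⬝ᵥ v s + v s ⬝ᵥ dv s) + (2*ε) * (v s ⬝ᵥ v s + u s ⬝ᵥ dv s) with hDdef
  have hE' : ∀ s, HasDerivAt E (D s) s := by
    intro s
    apply HasDerivAt.add
    apply HasDerivAt.add
    · exact hasDerivAt_dot (hu' s) (fun i => hasDerivAt_mulVec Lr (hu' s) i)
    · exact hasDerivAt_dot (hv' s) (hv' s)
    · exact (hasDerivAt_dot (hu' s) (hv' s)).const_mul (2*ε)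
  -- derivative bound : D s ≤ -(2α) E s
  have hD : ∀ s, D s ≤ -(2*α) * E s := by
    intro s
    have hps : 0 ≤ u s ⬝ᵥ u s := dot_self_nonneg _
    have hbs : 0 ≤ v s ⬝ᵥ v s := dot_self_nonneg _
    have hq1 : m * (u s ⬝ᵥ u s) ≤ u s ⬝ᵥ (Lr *ᵥ u s) := hq_lower (u s)
    have e1 : dv s ⬝ᵥ v s = -(v s ⬝ᵥ (Lr *ᵥ u s)) - (2*γ) * (v s ⬝ᵥ v s) := by
      rw [hdvdef]
      rw [sub_dotProduct, neg_dotProduct, smul_dotProduct, smul_eq_mul,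
        dotProduct_comm (Lr *ᵥ u s) (v s)]
    have e2 : v s ⬝ᵥ dv s = -(v s ⬝ᵥ (Lr *ᵥ u s)) - (2*γ) * (v s ⬝ᵥ v s) := by
      rw [hdvdef]
      rw [dotProduct_sub, dotProduct_neg, dotProduct_smul, smul_eq_mul]
    have e3 : u s ⬝ᵥ dv s = -(u s ⬝ᵥ (Lr *ᵥ u s)) - (2*γ) * (u s ⬝ᵥ v s) := by
      rw [hdvdef]
      rw [dotProduct_sub, dotProduct_neg, dotProduct_smul, smul_eq_mul,
        hsymdot (u s) (u s)]
    have e4 : u s ⬝ᵥ (Lr *ᵥ v s) = v s ⬝ᵥ (Lr *ᵥ u s) := hsymdot (u s) (v s)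
    -- cross term bound
    obtain ⟨c₀, hc₀, h8, hc₀eq⟩ : ∃ c : ℝ, 0 ≤ c ∧ c^2 ≤ 8*γ*ε*m ∧ c = 4*ε*(γ - α) := by
      have hγα : (0:ℝ) ≤ γ - α := by linarith
      refine ⟨4*ε*(γ - α), mul_nonneg (by linarith) hγα, ?_, rfl⟩
      have h1 : (γ - α)^2 ≤ γ^2 := pow_le_pow_left₀ hγα (by linarith) 2
      have h3 : 16*ε^2*(γ-α)^2 ≤ 16*ε^2*γ^2 :=
        mul_le_mul_of_nonneg_left h1 (by positivity)
      have h5 : (8*ε*γ)*(2*ε*γ) ≤ (8*ε*γ)*m :=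
        mul_le_mul_of_nonneg_left hε2 (by positivity)
      have h2 : (4*ε*(γ-α))^2 = 16*ε^2*(γ-α)^2 := by ring
      rw [h2]
      linarith [h3, h5]
    have hw : 0 ≤ ((2*ε*m) • u s + c₀ • v s) ⬝ᵥ ((2*ε*m) • u s + c₀ • v s) := dot_self_nonneg _
    have hwexp : ((2*ε*m) • u s + c₀ • v s) ⬝ᵥ ((2*ε*m) • u s + c₀ • v s)
        = (2*ε*m)^2 * (u s ⬝ᵥ u s) + 2*((2*ε*m)*c₀) * (u s ⬝ᵥ v s) + c₀^2 * (v s ⬝ᵥ v s) := by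
      simp only [add_dotProduct, dotProduct_add, smul_dotProduct,
        dotProduct_smul, smul_eq_mul, dotProduct_comm (v s) (u s)]
      ring
    have hcross : -(c₀ * (u s ⬝ᵥ v s)) ≤ ε*m*(u s ⬝ᵥ u s) + 2*γ*(v s ⬝ᵥ v s) := by
      have h4 : 0 < 4*ε*m := by positivity
      have h5 : c₀^2 * (v s ⬝ᵥ v s) ≤ 8*γ*ε*m * (v s ⬝ᵥ v s) :=
        mul_le_mul_of_nonneg_right h8 hbs
      have h6 : (4*ε*m) * (-(c₀ * (u s ⬝ᵥ v s)))
          ≤ (4*ε*m) * (ε*m*(u s ⬝ᵥ u s) + 2*γ*(v s ⬝ᵥ v s)) := by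
        rw [hwexp] at hw
        nlinarith
      exact le_of_mul_le_mul_left h6 h4
    -- assemble
    rw [hDdef, hEdef]
    simp only [e1, e2, e3, e4]
    have hq1' : (2*ε - 2*α) * (m * (u s ⬝ᵥ u s)) ≤ (2*ε - 2*α) * (u s ⬝ᵥ (Lr *ᵥ u s)) :=
      mul_le_mul_of_nonneg_left hq1 (by linarith)
    have hb' : 0 ≤ (2*γ - 2*ε - 2*α) * (v s ⬝ᵥ v s) := by
      apply mul_nonneg _ hbs
      linarith
    have hp' : 0 ≤ (ε - 2*α) * (m * (u s ⬝ᵥ u s)) := by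
      apply mul_nonneg _ (mul_nonneg (le_of_lt hm) hps)
      linarith
    rw [hc₀eq] at hcross
    nlinarith [hcross, hq1', hb', hp']
  -- Gronwall
  have hF' : ∀ s, HasDerivAt (fun r => E r * Real.exp (2*α*r))
      (D s * Real.exp (2*α*s) + E s * (2*α*Real.exp (2*α*s))) s := by
    intro s
    have hexp : HasDerivAt (fun r => Real.exp (2*α*r)) (2*α*Real.exp (2*α*s)) s := by
      have h := (((hasDerivAt_id s).const_mul (2*α)).exp)
      simpa [mul_comm] using h
    exact (hE' s).mul hexp
  have hFanti : Antitone (fun r => E r * Real.exp (2*α*r)) := by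
    apply antitone_of_deriv_nonpos
    · exact fun s => (hF' s).differentiableAt
    · intro s
      rw [(hF' s).deriv]
      have h1 := mul_le_mul_of_nonneg_right (hD s) (Real.exp_pos (2*α*s)).le
      nlinarith [Real.exp_pos (2*α*s)]
  have hEdecay : E t * Real.exp (2*α*t) ≤ E 0 := by
    have h := hFanti ht
    simpa using h
  -- norm facts
  have hsum : ∀ s, u s ⬝ᵥ u s + v s ⬝ᵥ v s = ∑ z, (x s z)^2 := by
    intro s
    rw [Fintype.sum_sum_type]
    simp only [dotProduct, hudef, hvdef, sq]
  have hnorm_le : ∀ s, ‖x s‖^2 ≤ u s ⬝ᵥ u s + v s ⬝ᵥ v s := by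
    intro s
    have hnn : (0:ℝ) ≤ u s ⬝ᵥ u s + v s ⬝ᵥ v s :=
      add_nonneg (dot_self_nonneg _) (dot_self_nonneg _)
    have h1 : ‖x s‖ ≤ Real.sqrt (u s ⬝ᵥ u s + v s ⬝ᵥ v s) := by
      apply pi_norm_le_iff_of_nonneg (Real.sqrt_nonneg _) |>.mpr
      intro z
      rw [Real.norm_eq_abs, ← Real.sqrt_sq_eq_abs]
      apply Real.sqrt_le_sqrt
      rw [hsum s]
      exact Finset.single_le_sum (fun i _ => sq_nonneg (x s i)) (Finset.mem_univ z)
    calc ‖x s‖^2 ≤ (Real.sqrt (u s ⬝ᵥ u s + v s ⬝ᵥ v s))^2 := by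
          apply pow_le_pow_left₀ (norm_nonneg _) h1
      _ = u s ⬝ᵥ u s + v s ⬝ᵥ v s := Real.sq_sqrt hnn
  have hnorm_ge : ∀ s, u s ⬝ᵥ u s + v s ⬝ᵥ v s ≤ (2*(n:ℝ)+2) * ‖x s‖^2 := by
    intro s
    rw [hsum s]
    have h1 : ∀ z, (x s z)^2 ≤ ‖x s‖^2 := by
      intro z
      have h2 := norm_le_pi_norm (x s) z
      rw [Real.norm_eq_abs] at h2
      nlinarith [abs_nonneg (x s z), norm_nonneg (x s), sq_abs (x s z)]
    calc ∑ z, (x s z)^2 ≤ ∑ _z : Fin (n+1) ⊕ Fin (n+1), ‖x s‖^2 :=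
          Finset.sum_le_sum (fun z _ => h1 z)
      _ = (2*(n:ℝ)+2) * ‖x s‖^2 := by
          rw [Finset.sum_const]
          simp only [Finset.card_univ, Fintype.card_sum, Fintype.card_fin, nsmul_eq_mul]
          push_cast
          ring
  -- E two-sided bounds
  have hElow : ∀ s, κ₁ * (u s ⬝ᵥ u s + v s ⬝ᵥ v s) ≤ E s := by
    intro s
    have hps : 0 ≤ u s ⬝ᵥ u s := dot_self_nonneg _
    have hbs : 0 ≤ v s ⬝ᵥ v s := dot_self_nonneg _
    have hq1 : m * (u s ⬝ᵥ u s) ≤ u s ⬝ᵥ (Lr *ᵥ u s) := hq_lower (u s)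
    have hsc : 2 * (u s ⬝ᵥ (-(v s))) ≤ u s ⬝ᵥ u s + (-(v s)) ⬝ᵥ (-(v s)) :=
      dot_amgm (u s) (-(v s))
    rw [dotProduct_neg, neg_dotProduct, dotProduct_neg, neg_neg] at hsc
    have h2 : -(2*ε) * (u s ⬝ᵥ v s) ≤ ε * (u s ⬝ᵥ u s + v s ⬝ᵥ v s) := by nlinarith
    rw [hEdef]
    simp only
    nlinarith [mul_le_mul_of_nonneg_right hκ₁a hps, mul_le_mul_of_nonneg_right hκ₁b hbs]
  have hEhigh : ∀ s, E s ≤ (m+5) * (u s ⬝ᵥ u s + v s ⬝ᵥ v s) := by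
    intro s
    have hps : 0 ≤ u s ⬝ᵥ u s := dot_self_nonneg _
    have hbs : 0 ≤ v s ⬝ᵥ v s := dot_self_nonneg _
    have hq2 : u s ⬝ᵥ (Lr *ᵥ u s) ≤ (m+4) * (u s ⬝ᵥ u s) := hq_upper (u s)
    have hsc : 2 * (u s ⬝ᵥ v s) ≤ u s ⬝ᵥ u s + v s ⬝ᵥ v s := dot_amgm (u s) (v s)
    have h2 : (2*ε) * (u s ⬝ᵥ v s) ≤ ε * (u s ⬝ᵥ u s + v s ⬝ᵥ v s) := by nlinarith
    rw [hEdef]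
    simp only
    nlinarith
  -- final chain
  have hchain : ‖x t‖^2 ≤ K * Real.exp (-(2*α)*t) * ‖x 0‖^2 := by
    have he1 : (0:ℝ) < Real.exp (2*α*t) := Real.exp_pos _
    have he1' : (0:ℝ) < Real.exp (-(2*α)*t) := Real.exp_pos _
    have he2 : Real.exp (-(2*α)*t) * Real.exp (2*α*t) = 1 := by
      rw [← Real.exp_add]
      norm_num
    have h1 : κ₁ * ‖x t‖^2 ≤ E t := by
      have := mul_le_mul_of_nonneg_left (hnorm_le t) hκ₁.le
      linarith [hElow t]
    have h2 : E 0 ≤ (m+5) * ((2*(n:ℝ)+2) * ‖x 0‖^2) := by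
      have := mul_le_mul_of_nonneg_left (hnorm_ge 0) (by linarith : (0:ℝ) ≤ m+5)
      linarith [hEhigh 0]
    have h3 : E t ≤ E 0 * Real.exp (-(2*α)*t) := by
      have h4 := mul_le_mul_of_nonneg_right hEdecay he1'.le
      calc E t = E t * Real.exp (2*α*t) * Real.exp (-(2*α)*t) := by
            rw [mul_assoc, mul_comm (Real.exp (2*α*t)), he2, mul_one]
        _ ≤ E 0 * Real.exp (-(2*α)*t) := h4
    have h5 : κ₁ * ‖x t‖^2 ≤ (m+5) * ((2*(n:ℝ)+2) * ‖x 0‖^2) * Real.exp (-(2*α)*t) := by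
      refine le_trans h1 (le_trans h3 ?_)
      exact mul_le_mul_of_nonneg_right h2 he1'.le
    have h6 : κ₁ * (K * Real.exp (-(2*α)*t) * ‖x 0‖^2)
        = (m+5) * ((2*(n:ℝ)+2) * ‖x 0‖^2) * Real.exp (-(2*α)*t) := by
      rw [show κ₁ * (K * Real.exp (-(2*α)*t) * ‖x 0‖^2)
          = (κ₁ * K) * Real.exp (-(2*α)*t) * ‖x 0‖^2 by ring, hKeq]
      ring
    have h7 : κ₁ * ‖x t‖^2 ≤ κ₁ * (K * Real.exp (-(2*α)*t) * ‖x 0‖^2) := by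
      rw [h6]; exact h5
    exact le_of_mul_le_mul_left h7 hκ₁
  have hRHSnn : 0 ≤ Real.sqrt K * Real.exp (-α*t) * ‖x 0‖ := by positivity
  have hsq : (Real.sqrt K * Real.exp (-α*t) * ‖x 0‖)^2 = K * Real.exp (-(2*α)*t) * ‖x 0‖^2 := by
    have he : (Real.exp (-α*t))^2 = Real.exp (-(2*α)*t) := by
      rw [sq, ← Real.exp_add]
      congr 1
      ring
    rw [mul_pow, mul_pow, Real.sq_sqrt hK.le, he]
  calc ‖x t‖ = Real.sqrt (‖x t‖^2) := (Real.sqrt_sq (norm_nonneg _)).symm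
    _ ≤ Real.sqrt ((Real.sqrt K * Real.exp (-α*t) * ‖x 0‖)^2) := by
        apply Real.sqrt_le_sqrt
        rw [hsq]
        exact hchain
    _ = Real.sqrt K * Real.exp (-α*t) * ‖x 0‖ := Real.sqrt_sq hRHSnn

/-- The block matrix `A = [[0, -I], [-Δ + ω₀² I, 2γ I]]` of the damped chain dynamics:
every (complex) eigenvalue `λ` of `A` satisfies `Re λ ≥ min{γ, ω₀²/(2γ)} > 0`; in
particular `A` is invertible and the semigroup `e^{-At}` is exponentially stable. -/
theorem block_matrix_stability (n : ℕ) (γ ω₀ : ℝ) (hγ : 0 < γ) (hω₀ : 0 < ω₀)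
    (A : Matrix (Fin (n + 1) ⊕ Fin (n + 1)) (Fin (n + 1) ⊕ Fin (n + 1)) ℝ)
    (hA : A = Matrix.fromBlocks 0 (-1) (negNeumannLap n + ω₀ ^ 2 • 1) ((2 * γ) • 1)) :
    (0 < min γ (ω₀ ^ 2 / (2 * γ))) ∧
    (∀ μ : ℂ, Module.End.HasEigenvalue
        (Matrix.toLin' (A.map (fun r => (r : ℂ)))) μ → min γ (ω₀ ^ 2 / (2 * γ)) ≤ μ.re) ∧
    IsUnit A ∧
    (∃ C : ℝ, 0 < C ∧ ∃ α : ℝ, 0 < α ∧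
      ∀ x : ℝ → (Fin (n + 1) ⊕ Fin (n + 1) → ℝ),
        (∀ t : ℝ, HasDerivAt x (-(A.mulVec (x t))) t) →
        ∀ t : ℝ, 0 ≤ t → ‖x t‖ ≤ C * Real.exp (-α * t) * ‖x 0‖) := by
  have hmin : 0 < min γ (ω₀ ^ 2 / (2 * γ)) := by
    apply lt_min hγ
    positivity
  have hpart2 : ∀ μ : ℂ, Module.End.HasEigenvalue
      (Matrix.toLin' (A.map (fun r => (r : ℂ)))) μ → min γ (ω₀ ^ 2 / (2 * γ)) ≤ μ.re := by
    intro μ hμ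
    rw [hA] at hμ
    exact eig_re_bound n γ ω₀ hγ hω₀ μ hμ
  have hunit : IsUnit A := by
    classical
    rw [Matrix.isUnit_iff_isUnit_det, isUnit_iff_ne_zero]
    intro hdet
    have hdetC : (A.map (fun r => (r : ℂ))).det = 0 := by
      have h := RingHom.map_det Complex.ofRealHom A
      rw [hdet, map_zero] at h
      exact h.symm
    obtain ⟨w, hw0, hww⟩ := (Matrix.exists_mulVec_eq_zero_iff).mpr hdetC
    have hev : Module.End.HasEigenvalue (Matrix.toLin' (A.map (fun r => (r : ℂ)))) 0 := by
      apply Module.End.hasEigenvalue_of_hasEigenvector (x := w)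
      refine ⟨Module.End.mem_eigenspace_iff.mpr ?_, hw0⟩
      rw [Matrix.toLin'_apply, hww, zero_smul]
    have := hpart2 0 hev
    simp only [Complex.zero_re] at this
    linarith
  refine ⟨hmin, hpart2, hunit, ?_⟩
  obtain ⟨C, hC, α, hα, hdecay⟩ := exp_stability n γ ω₀ hγ hω₀
  refine ⟨C, hC, α, hα, ?_⟩
  intro x hx
  apply hdecay
  intro s
  have h := hx s
  rw [hA] at h
  exact h
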